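/- arXiv:2002.04735 — 2 statements merged into one kernel-verified Lean document; each statement's English description precedes it below -/
import Mathlib

section
/- Let G be a finite group, H a subgroup of G, and let U and V be finite-dimensional real representations of H such that χ_U(h) = χ_V(h) for every h ∈ H whose order is a prime power (including the identity), and such that dim_ℝ U^H = dim_ℝ V^H = 0. Then the induced representations satisfy χ_{Ind_H^G(U)}(g) = χ_{Ind_H^G(V)}(g) for every g ∈ G whose order is a prime power, and dim_ℝ (Ind_H^G(U))^G = dim_ℝ (Ind_H^G(V))^G = 0. -/
/-!
STATEMENT 18: Let `G` be a finite group, `H` a subgroup of `G`, and let `U` and `V` be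
finite-dimensional real representations of `H` such that `χ_U(h) = χ_V(h)` for every
`h ∈ H` whose order is a prime power (including the identity), and such that
`dim_ℝ U^H = dim_ℝ V^H = 0`. Then the induced representations satisfy
`χ_{Ind_H^G(U)}(g) = χ_{Ind_H^G(V)}(g)` for every `g ∈ G` whose order is a prime power,
and `dim_ℝ (Ind_H^G(U))^G = dim_ℝ (Ind_H^G(V))^G = 0`.

The induced representation is realized concretely: `Ind_H^G(V)` is the space of functions
`f : G → V` with `f (h * x) = ρ h (f x)` for `h ∈ H`, on which `G` acts by right
translation; its character at `g` is the trace of the action of `g`, and `(-)^L` denotes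
the subspace of vectors fixed by every element of `L`. -/

/-- A natural number is a prime power `p ^ k` (with `k ≥ 0` allowed, so `1` is a prime
power). -/
def IsPrimePowerOrder (n : ℕ) : Prop :=
  ∃ p k : ℕ, Nat.Prime p ∧ n = p ^ k

variable {G : Type} [Group G]

/-- The carrier of the induced representation `Ind_H^G V`: the space of functions
`f : G → V` satisfying `f (h * x) = ρ h (f x)` for all `h ∈ H`, `x ∈ G`. -/
def indCarrier (H : Subgroup G) {V : Type} [AddCommGroup V] [Module ℝ V]
    (ρ : Representation ℝ ↥H V) : Submodule ℝ (G → V) where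
  carrier := {f | ∀ (h : ↥H) (x : G), f ((h : G) * x) = ρ h (f x)}
  add_mem' := by
    intro a b ha hb h x
    simp only [Pi.add_apply, ha h x, hb h x, map_add]
  zero_mem' := by
    intro h x
    simp
  smul_mem' := by
    intro c a ha h x
    simp only [Pi.smul_apply, ha h x, map_smul]

/-- The induced representation `Ind_H^G V` of a real representation `ρ` of `H ≤ G`:
`G` acts on `indCarrier H ρ` by right translation. -/
noncomputable def indRep (H : Subgroup G) {V : Type} [AddCommGroup V] [Module ℝ V]
    (ρ : Representation ℝ ↥H V) : Representation ℝ G ↥(indCarrier H ρ) where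
  toFun g := (LinearMap.funLeft ℝ V (fun x => x * g)).restrict
    (p := indCarrier H ρ) (q := indCarrier H ρ)
    (fun f hf h x => by
      simpa [LinearMap.funLeft_apply, mul_assoc] using hf h (x * g))
  map_one' := by
    apply LinearMap.ext
    intro f
    apply Subtype.ext
    funext x
    simp [LinearMap.restrict_apply, LinearMap.funLeft_apply]
  map_mul' g g' := by
    apply LinearMap.ext
    intro f
    apply Subtype.ext
    funext x
    show (f : G → V) (x * (g * g')) = (f : G → V) (x * g * g')
    rw [mul_assoc]

/-- The submodule of vectors fixed by every element of a subgroup `K`. -/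
def fixedSubmodule {V : Type} [AddCommGroup V] [Module ℝ V]
    (ρ : Representation ℝ G V) (K : Subgroup G) : Submodule ℝ V where
  carrier := {v | ∀ g ∈ K, ρ g v = v}
  add_mem' := by
    intro a b ha hb g hg
    simp [map_add, ha g hg, hb g hg]
  zero_mem' := by
    intro g hg
    simp
  smul_mem' := by
    intro c v hv g hg
    simp [map_smul, hv g hg]

/-- The real dimension of the subspace of `K`-fixed vectors. -/
noncomputable def fixedDim {V : Type} [AddCommGroup V] [Module ℝ V]
    (ρ : Representation ℝ G V) (K : Subgroup G) : ℕ :=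
  Module.finrank ℝ ↥(fixedSubmodule ρ K)

/-!
Restricting a section `f : G → V` of `Ind_H^G V` to representatives of the right cosets `H\G`
identifies `Ind_H^G V` with `H\G → V`, on which `g` acts by a block permutation matrix. Hence
`χ_Ind(g)` is the sum of `χ_V(x g x⁻¹)` over the cosets `H x` fixed by `g`, and each `x g x⁻¹` is
conjugate to `g`, so it has the same order. A `G`-fixed section is constant, with `H`-fixed value.
-/

open LinearMap in
theorem trace_pi_comp_proj {R M ι : Type*} [CommRing R] [AddCommGroup M] [Module R M]
    [Module.Free R M] [Module.Finite R M] [Fintype ι] [DecidableEq ι]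
    (σ : ι → ι) (B : ι → M →ₗ[R] M) :
    trace R (ι → M) (pi fun i => B i ∘ₗ proj (R := R) (φ := fun _ : ι => M) (σ i)) =
      ∑ i with σ i = i, trace R M (B i) := by
  have hsum : (pi fun i => B i ∘ₗ proj (R := R) (φ := fun _ : ι => M) (σ i)) =
      ∑ i, single R (fun _ : ι => M) i ∘ₗ (B i ∘ₗ proj (σ i)) := by
    ext φ j
    simp [Pi.single_apply]
  have hterm (i : ι) : trace R (ι → M) (single R (fun _ : ι => M) i ∘ₗ (B i ∘ₗ proj (σ i))) =
      if σ i = i then trace R M (B i) else 0 := by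
    rw [trace_comp_comm', comp_assoc]
    split_ifs with h
    · rw [h, proj_comp_single_same, comp_id]
    · rw [proj_comp_single_ne R (fun _ : ι => M) _ _ h, comp_zero, map_zero]
  rw [hsum, map_sum, Finset.sum_filter]
  exact Finset.sum_congr rfl fun i _ => hterm i

theorem IsConj.orderOf_eq {α : Type*} [Group α] {a b : α} (h : IsConj a b) :
    orderOf a = orderOf b :=
  let ⟨_, hc⟩ := h
  hc.orderOf_eq

open QuotientGroup

section Induction

variable {H : Subgroup G}

theorem rightRel_mk_mul_left (h : H) (x : G) :
    Quotient.mk (rightRel H) (h * x) = Quotient.mk (rightRel H) x :=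
  Quotient.sound <| rightRel_apply.2 <| by simp [H.inv_mem h.2]

variable (H) in
noncomputable def cosetFactor (x : G) : H :=
  ⟨x * (Quotient.mk (rightRel H) x).out⁻¹,
    rightRel_apply.1 (Quotient.mk_out (s := rightRel H) x)⟩

theorem cosetFactor_mul_out (x : G) :
    (cosetFactor H x : G) * (Quotient.mk (rightRel H) x).out = x :=
  inv_mul_cancel_right _ _

theorem cosetFactor_mul (h : H) (x : G) : cosetFactor H (h * x) = h * cosetFactor H x :=
  Subtype.ext <| by simp [cosetFactor, rightRel_mk_mul_left, mul_assoc]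

theorem cosetFactor_out (q : Quotient (rightRel H)) : cosetFactor H q.out = 1 :=
  Subtype.ext <| by simp [cosetFactor]

variable {V : Type} [AddCommGroup V] [Module ℝ V]

theorem indRep_apply (ρ : Representation ℝ H V) (g : G) (f : indCarrier H ρ) (x : G) :
    (indRep H ρ g f).1 x = f.1 (x * g) :=
  rfl

noncomputable def indCarrierEquivPi (ρ : Representation ℝ H V) :
    indCarrier H ρ ≃ₗ[ℝ] (Quotient (rightRel H) → V) where
  toFun f q := f.1 q.out
  map_add' _ _ := rfl
  map_smul' _ _ := rfl
  invFun φ := ⟨fun x => ρ (cosetFactor H x) (φ (Quotient.mk _ x)), fun h x => by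
    simp only [cosetFactor_mul, rightRel_mk_mul_left, map_mul, Module.End.mul_apply]⟩
  left_inv f := Subtype.ext <| funext fun x => by
    conv_rhs => rw [← cosetFactor_mul_out x, f.2]
  right_inv φ := funext fun q => by simp [cosetFactor_out]

theorem indCarrierEquivPi_conj_indRep (ρ : Representation ℝ H V) (g : G) :
    (indCarrierEquivPi ρ).conj (indRep H ρ g) =
      LinearMap.pi fun q : Quotient (rightRel H) =>
        ρ (cosetFactor H (q.out * g)) ∘ₗ LinearMap.proj (Quotient.mk _ (q.out * g)) :=
  rfl

theorem trace_indRep [Fintype (Quotient (rightRel H))] [DecidableEq (Quotient (rightRel H))]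
    [FiniteDimensional ℝ V] (ρ : Representation ℝ H V) (g : G) :
    LinearMap.trace ℝ (indCarrier H ρ) (indRep H ρ g) =
      ∑ q : Quotient (rightRel H) with Quotient.mk _ (q.out * g) = q,
        LinearMap.trace ℝ V (ρ (cosetFactor H (q.out * g))) := by
  rw [← LinearMap.trace_conj' _ (indCarrierEquivPi ρ), indCarrierEquivPi_conj_indRep]
  exact trace_pi_comp_proj _ _

theorem isConj_cosetFactor_out_mul {q : Quotient (rightRel H)} {g : G}
    (hq : Quotient.mk _ (q.out * g) = q) : IsConj g (cosetFactor H (q.out * g)) :=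
  isConj_iff.2 ⟨q.out, by simp [cosetFactor, hq]⟩

theorem trace_indRep_eq_of_isConj [Fintype (Quotient (rightRel H))]
    [DecidableEq (Quotient (rightRel H))] {U : Type} [AddCommGroup U] [Module ℝ U]
    [FiniteDimensional ℝ U] [FiniteDimensional ℝ V]
    (ρU : Representation ℝ H U) (ρV : Representation ℝ H V) (g : G)
    (hchar : ∀ h : H, IsConj g h → LinearMap.trace ℝ U (ρU h) = LinearMap.trace ℝ V (ρV h)) :
    LinearMap.trace ℝ (indCarrier H ρU) (indRep H ρU g) =
      LinearMap.trace ℝ (indCarrier H ρV) (indRep H ρV g) := by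
  rw [trace_indRep, trace_indRep]
  exact Finset.sum_congr rfl fun q hq =>
    hchar _ (isConj_cosetFactor_out_mul (Finset.mem_filter.1 hq).2)

theorem fixedSubmodule_indRep_eq_bot {ρ : Representation ℝ H V}
    (hρ : fixedSubmodule ρ ⊤ = ⊥) : fixedSubmodule (indRep H ρ) ⊤ = ⊥ := by
  refine (Submodule.eq_bot_iff _).2 fun f hf => ?_
  have hconst (x : G) : f.1 x = f.1 1 := by
    simpa [indRep_apply] using congrFun (congrArg Subtype.val (hf x trivial)) 1
  have hfix : f.1 1 ∈ fixedSubmodule ρ ⊤ := fun h _ => by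
    rw [← f.2 h 1, mul_one]
    exact hconst h
  rw [hρ, Submodule.mem_bot] at hfix
  exact Subtype.ext <| funext fun x => (hconst x).trans hfix

theorem fixedDim_indRep_eq_zero [FiniteDimensional ℝ V] {ρ : Representation ℝ H V}
    (hρ : fixedDim ρ ⊤ = 0) : fixedDim (indRep H ρ) ⊤ = 0 := by
  rw [fixedDim, fixedSubmodule_indRep_eq_bot (Submodule.finrank_eq_zero.1 hρ), finrank_bot]

end Induction

theorem statement18 {G : Type} [Group G] [Fintype G] (H : Subgroup G)
    {U V : Type} [AddCommGroup U] [Module ℝ U] [FiniteDimensional ℝ U]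
    [AddCommGroup V] [Module ℝ V] [FiniteDimensional ℝ V]
    (ρU : Representation ℝ ↥H U) (ρV : Representation ℝ ↥H V)
    (hchar : ∀ h : ↥H, IsPrimePowerOrder (orderOf h) →
      LinearMap.trace ℝ U (ρU h) = LinearMap.trace ℝ V (ρV h))
    (hU : fixedDim ρU ⊤ = 0) (hV : fixedDim ρV ⊤ = 0) :
    (∀ g : G, IsPrimePowerOrder (orderOf g) →
      LinearMap.trace ℝ ↥(indCarrier H ρU) (indRep H ρU g) =
        LinearMap.trace ℝ ↥(indCarrier H ρV) (indRep H ρV g)) ∧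
    fixedDim (indRep H ρU) ⊤ = 0 ∧ fixedDim (indRep H ρV) ⊤ = 0 := by
  classical
  refine ⟨fun g hg => trace_indRep_eq_of_isConj ρU ρV g fun h hconj => hchar h ?_,
    fixedDim_indRep_eq_zero hU, fixedDim_indRep_eq_zero hV⟩
  rwa [← Subgroup.orderOf_coe, ← hconj.orderOf_eq]
end

section
/- Let G be a finite group and H a subgroup of G. If H is an Oliver group, then G is an Oliver group. -/
/-- A finite group `G` is an Oliver group if there is no chain `P ⊴ H ⊴ G` with `P` and
`G/H` of prime power order and `H/P` cyclic. -/
def IsOliverGroup (G : Type) [Group G] : Prop :=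
  ¬ ∃ (P H : Subgroup G) (_ : P ≤ H) (hPH : (P.subgroupOf H).Normal), H.Normal ∧
      IsPrimePowerOrder (Nat.card ↥P) ∧ IsPrimePowerOrder H.index ∧
      (haveI := hPH; IsCyclic (↥H ⧸ P.subgroupOf H))

/-!
An injective homomorphism `f : A →* G` pulls a chain `P ⊴ K ⊴ G` back to `f⁻¹ P ⊴ f⁻¹ K ⊴ A`.
Lagrange bounds `|f⁻¹ P|` by `|P|`, the index of `f⁻¹ K` divides that of the normal subgroup
`K`, and `f⁻¹ K / f⁻¹ P` embeds into the cyclic group `K / P`; so the pulled-back chain is again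
of the forbidden kind. Applied to the inclusion `H ↪ G`, this shows that `G` is an Oliver group
as soon as `H` is.
-/

theorem IsPrimePowerOrder.of_dvd {m n : ℕ} (hn : IsPrimePowerOrder n) (hmn : m ∣ n) :
    IsPrimePowerOrder m := by
  obtain ⟨p, k, hp, rfl⟩ := hn
  obtain ⟨j, -, rfl⟩ := (Nat.dvd_prime_pow hp).mp hmn
  exact ⟨p, j, hp, rfl⟩

theorem isCyclic_quotient_comap {A B : Type*} [Group A] [Group B] (f : A →* B)
    (N : Subgroup B) [N.Normal] [IsCyclic (B ⧸ N)] : IsCyclic (A ⧸ N.comap f) := by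
  let ψ := (QuotientGroup.mk' N).comp f
  have hker : ψ.ker = N.comap f := by rw [← MonoidHom.comap_ker, QuotientGroup.ker_mk']
  have : IsCyclic (A ⧸ ψ.ker) := isCyclic_of_injective _ (QuotientGroup.kerLift_injective ψ)
  exact isCyclic_of_surjective _ (QuotientGroup.quotientMulEquivOfEq hker).surjective

theorem MonoidHom.subgroupComap_injective {A G : Type*} [Group A] [Group G] {f : A →* G}
    (hf : Function.Injective f) (K : Subgroup G) : Function.Injective (f.subgroupComap K) :=
  fun _ _ h => Subtype.ext (hf (congrArg Subtype.val h))

theorem IsOliverGroup.of_injective {A G : Type} [Group A] [Group G] {f : A →* G}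
    (hf : Function.Injective f) (hA : IsOliverGroup A) : IsOliverGroup G := by
  rintro ⟨P, K, hPK, hPK_normal, hK_normal, hP, hK, hcyc⟩
  -- `(P.comap f).subgroupOf (K.comap f)` is definitionally
  -- `(P.subgroupOf K).comap (f.subgroupComap K)`.
  refine hA ⟨P.comap f, K.comap f, Subgroup.comap_mono hPK, hPK_normal.comap (f.subgroupComap K),
    hK_normal.comap f, hP.of_dvd ?_, hK.of_dvd ?_, ?_⟩
  · exact Subgroup.card_dvd_of_injective _ (MonoidHom.subgroupComap_injective hf P)
  · rw [Subgroup.index_comap]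
    exact Subgroup.relIndex_dvd_index_of_normal K f.range
  · exact isCyclic_quotient_comap (f.subgroupComap K) (P.subgroupOf K)

theorem statement19_general {G : Type} [Group G] (H : Subgroup G)
    (hH : IsOliverGroup ↥H) : IsOliverGroup G :=
  hH.of_injective H.subtype_injective

theorem statement19 {G : Type} [Group G] [Finite G] (H : Subgroup G)
    (hH : IsOliverGroup ↥H) : IsOliverGroup G :=
  statement19_general H hH
end
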